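/- Let 𝒳 be a rearrangement-invariant space over a non-atomic probability space with 𝒳 ≠ L^∞, and suppose 𝒳 fails the AOCEA property, witnessed by X₀ ∈ 𝒳₊ with d(𝒞ℒ(X₀), 𝒳_a) > 0 where 𝒞ℒ(X₀) = co{X : X ∼ X₀}. Then d(𝒞ℒ(X₀), co(𝒳_a ∪ (−𝒳₊))) > 0, i.e., the convex hull of equidistributed copies of X₀ stays at positive distance from the convex hull of the union of the order continuous part and the negative cone. -/

import Mathlib

open MeasureTheory Filter Set

/-- A rearrangement-invariant Banach function space over a measure space,
encoded as a set of (everywhere-defined) random variables together with a norm. -/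
structure RISpace {Ω : Type} [MeasurableSpace Ω] (μ : Measure Ω) where
  carrier : Set (Ω → ℝ)
  N : (Ω → ℝ) → ℝ
  zero_mem : (0 : Ω → ℝ) ∈ carrier
  add_mem : ∀ {X Y : Ω → ℝ}, X ∈ carrier → Y ∈ carrier → X + Y ∈ carrier
  smul_mem : ∀ (c : ℝ) {X : Ω → ℝ}, X ∈ carrier → c • X ∈ carrier
  nontrivial : ∃ X ∈ carrier, ¬ (X =ᵐ[μ] 0)
  aemeasurable : ∀ X ∈ carrier, AEMeasurable X μ
  norm_nonneg' : ∀ X : Ω → ℝ, 0 ≤ N X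
  norm_zero' : N 0 = 0
  norm_triangle : ∀ X Y : Ω → ℝ, X ∈ carrier → Y ∈ carrier → N (X + Y) ≤ N X + N Y
  norm_smul' : ∀ (c : ℝ) (X : Ω → ℝ), N (c • X) = |c| * N X
  solid : ∀ X ∈ carrier, ∀ Y : Ω → ℝ, AEMeasurable Y μ →
    (∀ᵐ ω ∂μ, |Y ω| ≤ |X ω|) → Y ∈ carrier ∧ N Y ≤ N X
  ri : ∀ X ∈ carrier, ∀ Z : Ω → ℝ, AEMeasurable Z μ →
    μ.map Z = μ.map X → Z ∈ carrier ∧ N Z = N X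
  integrable' : ∀ X ∈ carrier, Integrable X μ
  const_mem : ∀ c : ℝ, (fun _ => c) ∈ carrier
  norm_le_L1 : ∃ C > 0, ∀ X ∈ carrier, ∫ ω, |X ω| ∂μ ≤ C * N X
  complete : ∀ f : ℕ → (Ω → ℝ), (∀ n, f n ∈ carrier) →
    (∀ ε : ℝ, 0 < ε → ∃ M : ℕ, ∀ m n : ℕ, M ≤ m → M ≤ n → N (f m - f n) < ε) →
    ∃ g ∈ carrier, Tendsto (fun n => N (f n - g)) atTop (nhds 0)

namespace RISpace

variable {Ω : Type} [MeasurableSpace Ω] {μ : Measure Ω}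

/-- The set of (a.e.) bounded random variables, i.e. `L^∞`. -/
def Linfty (μ : Measure Ω) : Set (Ω → ℝ) := {X | ∃ C : ℝ, ∀ᵐ ω ∂μ, |X ω| ≤ C}

/-- The order continuous part `𝒳_a` of `𝒳`:
members whose norm vanishes along sets of small measure. -/
def oc (S : RISpace μ) : Set (Ω → ℝ) :=
  {X | X ∈ S.carrier ∧ ∀ ε : ℝ, 0 < ε → ∃ δ : ℝ, 0 < δ ∧
    ∀ A : Set Ω, MeasurableSet A → μ A < ENNReal.ofReal δ → S.N (A.indicator X) < ε}

/-- Distance from `X` to a set `𝒜` in the norm of `𝒳`. -/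
noncomputable def distTo (S : RISpace μ) (X : Ω → ℝ) (𝒜 : Set (Ω → ℝ)) : ℝ :=
  sInf ((fun V => S.N (X - V)) '' 𝒜)

/-- The negative part `X⁻ = max (−X, 0)` of a random variable. -/
def negp (X : Ω → ℝ) : Ω → ℝ := fun ω => max (-X ω) 0

/-- The risk measure `ρ(X) = d(X⁻, 𝒳_a) − E[X]` of Example 2.1. -/
noncomputable def rho (S : RISpace μ) (X : Ω → ℝ) : ℝ :=
  S.distTo (negp X) S.oc - ∫ ω, X ω ∂μ

end RISpace

/-!
For `Z ≥ 0`, `V ∈ 𝒳_a` and `U ≥ 0` put `T = Z - (V - U)` and `W = (Z - |T|)⁺`.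
Pointwise `0 ≤ W ≤ V⁺` and `|Z - W| = min (|T|, Z) ≤ |T|`, so by solidity `W ∈ 𝒳_a`
and `‖Z - W‖ ≤ ‖T‖`. Hence every distance from `𝒞ℒ(X₀)` to `co(𝒳_a ∪ (−𝒳₊)) ⊆ 𝒳_a − 𝒳₊`
dominates a distance from `𝒞ℒ(X₀)` to `𝒳_a`.
-/

open scoped Pointwise

lemma abs_max_sub_abs_sub_le {z v u : ℝ} (hu : 0 ≤ u) :
    |max (z - |z - (v - u)|) 0| ≤ |v| := by
  rw [abs_of_nonneg (le_max_right _ _)]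
  exact max_le (by linarith [le_abs_self (z - (v - u)), le_abs_self v]) (abs_nonneg v)

lemma abs_sub_max_sub_abs_le {z t : ℝ} (hz : 0 ≤ z) : |z - max (z - |t|) 0| ≤ |t| := by
  rcases le_total (z - |t|) 0 with h | h
  · rw [max_eq_right h, sub_zero, abs_of_nonneg hz]; linarith
  · rw [max_eq_left h, sub_sub_cancel, abs_abs]

namespace RISpace

variable {Ω : Type} [MeasurableSpace Ω] {μ : Measure Ω} (S : RISpace μ)

/-- The positive cone `𝒳₊`. -/
def nonnegCone : Set (Ω → ℝ) := {U | U ∈ S.carrier ∧ ∀ᵐ ω ∂μ, 0 ≤ U ω}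

lemma sub_mem {X Y : Ω → ℝ} (hX : X ∈ S.carrier) (hY : Y ∈ S.carrier) :
    X - Y ∈ S.carrier := by
  simpa [sub_eq_add_neg] using S.add_mem hX (S.smul_mem (-1) hY)

lemma convex_carrier : Convex ℝ S.carrier := fun _ hX _ hY a b _ _ _ =>
  S.add_mem (S.smul_mem a hX) (S.smul_mem b hY)

lemma indicator_mem {X : Ω → ℝ} (hX : X ∈ S.carrier) {A : Set Ω} (hA : MeasurableSet A) :
    A.indicator X ∈ S.carrier := by
  refine (S.solid X hX _ ((S.aemeasurable X hX).indicator hA) (ae_of_all _ fun ω => ?_)).1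
  by_cases hω : ω ∈ A <;> simp [hω]

lemma zero_mem_oc : (0 : Ω → ℝ) ∈ S.oc :=
  ⟨S.zero_mem, fun _ hε => ⟨1, one_pos, fun _ _ _ => by simpa [S.norm_zero'] using hε⟩⟩

lemma mem_oc_of_abs_le {V W : Ω → ℝ} (hV : V ∈ S.oc) (hW : AEMeasurable W μ)
    (hle : ∀ᵐ ω ∂μ, |W ω| ≤ |V ω|) : W ∈ S.oc := by
  refine ⟨(S.solid V hV.1 W hW hle).1, fun ε hε => ?_⟩
  obtain ⟨δ, hδ, hsmall⟩ := hV.2 ε hε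
  refine ⟨δ, hδ, fun A hA hμA => lt_of_le_of_lt ?_ (hsmall A hA hμA)⟩
  refine (S.solid _ (S.indicator_mem hV.1 hA) _ (hW.indicator hA) ?_).2
  filter_upwards [hle] with ω hω
  by_cases hωA : ω ∈ A <;> simp [hωA, hω]

lemma norm_smul_le_of_le_one {c : ℝ} (hc₀ : 0 ≤ c) (hc₁ : c ≤ 1) (X : Ω → ℝ) :
    S.N (c • X) ≤ S.N X := by
  rw [S.norm_smul', abs_of_nonneg hc₀]
  exact mul_le_of_le_one_left (S.norm_nonneg' X) hc₁

lemma convex_oc : Convex ℝ S.oc := by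
  intro X hX Y hY a b ha hb hab
  refine ⟨S.convex_carrier hX.1 hY.1 ha hb hab, fun ε hε => ?_⟩
  obtain ⟨δ₁, hδ₁, hX'⟩ := hX.2 (ε / 2) (half_pos hε)
  obtain ⟨δ₂, hδ₂, hY'⟩ := hY.2 (ε / 2) (half_pos hε)
  refine ⟨min δ₁ δ₂, lt_min hδ₁ hδ₂, fun A hA hμA => ?_⟩
  have hμ₁ := hμA.trans_le (ENNReal.ofReal_le_ofReal (min_le_left δ₁ δ₂))
  have hμ₂ := hμA.trans_le (ENNReal.ofReal_le_ofReal (min_le_right δ₁ δ₂))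
  have hsplit : A.indicator (a • X + b • Y) = a • A.indicator X + b • A.indicator Y := by
    funext ω
    by_cases hω : ω ∈ A <;> simp [hω]
  calc S.N (A.indicator (a • X + b • Y))
      ≤ S.N (a • A.indicator X) + S.N (b • A.indicator Y) := by
        rw [hsplit]
        exact S.norm_triangle _ _ (S.smul_mem a (S.indicator_mem hX.1 hA))
          (S.smul_mem b (S.indicator_mem hY.1 hA))
    _ ≤ S.N (A.indicator X) + S.N (A.indicator Y) :=
        add_le_add (S.norm_smul_le_of_le_one ha (by linarith) _)
          (S.norm_smul_le_of_le_one hb (by linarith) _)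
    _ < ε / 2 + ε / 2 := add_lt_add (hX' A hA hμ₁) (hY' A hA hμ₂)
    _ = ε := add_halves ε

lemma convex_nonnegCone : Convex ℝ S.nonnegCone := by
  refine S.convex_carrier.inter fun X hX Y hY a b ha hb _ => ?_
  filter_upwards [show ∀ᵐ ω ∂μ, 0 ≤ X ω from hX, show ∀ᵐ ω ∂μ, 0 ≤ Y ω from hY] with ω hXω hYω
  simpa using add_nonneg (mul_nonneg ha hXω) (mul_nonneg hb hYω)

lemma convexHull_oc_union_neg_subset :
    convexHull ℝ (S.oc ∪ {W | ∃ U ∈ S.carrier, (∀ᵐ ω ∂μ, 0 ≤ U ω) ∧ W = -U}) ⊆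
      S.oc - S.nonnegCone := by
  refine convexHull_min ?_ (S.convex_oc.sub S.convex_nonnegCone)
  rintro V (hV | ⟨U, hU, hUnonneg, rfl⟩)
  · exact ⟨V, hV, 0, ⟨S.zero_mem, ae_of_all _ fun _ => le_rfl⟩, sub_zero V⟩
  · exact ⟨0, S.zero_mem_oc, U, ⟨hU, hUnonneg⟩, zero_sub U⟩

lemma convexHull_equidistributed_subset {X₀ : Ω → ℝ} (hX₀ : X₀ ∈ S.carrier)
    (hX₀nonneg : ∀ᵐ ω ∂μ, 0 ≤ X₀ ω) :
    convexHull ℝ {X | X ∈ S.carrier ∧ μ.map X = μ.map X₀} ⊆ S.nonnegCone := by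
  refine convexHull_min (fun X ⟨hX, hmap⟩ => ⟨hX, ?_⟩) S.convex_nonnegCone
  have hlaw : ∀ᵐ y ∂μ.map X₀, 0 ≤ y :=
    (ae_map_iff (S.aemeasurable X₀ hX₀) measurableSet_Ici).2 hX₀nonneg
  exact ae_of_ae_map (S.aemeasurable X hX) (hmap ▸ hlaw)

lemma exists_mem_oc_norm_sub_le {Z V U : Ω → ℝ} (hZ : Z ∈ S.nonnegCone) (hV : V ∈ S.oc)
    (hU : U ∈ S.nonnegCone) : ∃ W ∈ S.oc, S.N (Z - W) ≤ S.N (Z - (V - U)) := by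
  have hZm := S.aemeasurable Z hZ.1
  have hTm : AEMeasurable (fun ω => |Z ω - (V ω - U ω)|) μ :=
    continuous_abs.measurable.comp_aemeasurable
      (hZm.sub ((S.aemeasurable V hV.1).sub (S.aemeasurable U hU.1)))
  have hWm : AEMeasurable (fun ω => max (Z ω - |Z ω - (V ω - U ω)|) 0) μ :=
    (hZm.sub hTm).max aemeasurable_const
  refine ⟨_, S.mem_oc_of_abs_le hV hWm ?_, ?_⟩
  · filter_upwards [hU.2] with ω hUω using abs_max_sub_abs_sub_le hUω
  · refine (S.solid _ (S.sub_mem hZ.1 (S.sub_mem hV.1 hU.1)) _ (hZm.sub hWm) ?_).2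
    filter_upwards [hZ.2] with ω hZω using abs_sub_max_sub_abs_le hZω

end RISpace

theorem dist_positive_to_hull_general {Ω : Type} [MeasurableSpace Ω] (μ : Measure Ω)
    (S : RISpace μ)
    (X₀ : Ω → ℝ) (hX₀ : X₀ ∈ S.carrier) (hX₀pos : ∀ᵐ ω ∂μ, 0 ≤ X₀ ω)
    (hfail : 0 < sInf {z : ℝ |
      ∃ Z ∈ convexHull ℝ {X | X ∈ S.carrier ∧ μ.map X = μ.map X₀},
      ∃ V ∈ S.oc, z = S.N (Z - V)}) :
    0 < sInf {z : ℝ |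
      ∃ Z ∈ convexHull ℝ {X | X ∈ S.carrier ∧ μ.map X = μ.map X₀},
      ∃ V ∈ convexHull ℝ
        (S.oc ∪ {W | ∃ U ∈ S.carrier, (∀ᵐ ω ∂μ, 0 ≤ U ω) ∧ W = -U}),
      z = S.N (Z - V)} := by
  have hbdd : BddBelow {z : ℝ |
      ∃ Z ∈ convexHull ℝ {X | X ∈ S.carrier ∧ μ.map X = μ.map X₀},
      ∃ V ∈ S.oc, z = S.N (Z - V)} :=
    ⟨0, by rintro _ ⟨Z, -, V, -, rfl⟩; exact S.norm_nonneg' _⟩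
  have hX₀mem := subset_convexHull ℝ {X | X ∈ S.carrier ∧ μ.map X = μ.map X₀} ⟨hX₀, rfl⟩
  refine hfail.trans_le (le_csInf ⟨_, X₀, hX₀mem, 0,
    subset_convexHull ℝ _ (Or.inl S.zero_mem_oc), rfl⟩ ?_)
  rintro _ ⟨Z, hZ, _, hV, rfl⟩
  obtain ⟨V, hVoc, U, hU, rfl⟩ := S.convexHull_oc_union_neg_subset hV
  obtain ⟨W, hWoc, hle⟩ := S.exists_mem_oc_norm_sub_le
    (S.convexHull_equidistributed_subset hX₀ hX₀pos hZ) hVoc hU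
  exact (csInf_le hbdd ⟨Z, hZ, W, hWoc, rfl⟩).trans hle

/-- If `𝒳` fails the AOCEA property, witnessed by `X₀ ∈ 𝒳₊` with
`d(𝒞ℒ(X₀), 𝒳_a) > 0` where `𝒞ℒ(X₀) = co{X : X ∼ X₀}`, then also
`d(𝒞ℒ(X₀), co(𝒳_a ∪ (−𝒳₊))) > 0`. -/
theorem dist_positive_to_hull {Ω : Type} [MeasurableSpace Ω] (μ : Measure Ω)
    [IsProbabilityMeasure μ] [NullSingletonClass μ]
    (S : RISpace μ) (hne : S.carrier ≠ RISpace.Linfty μ)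
    (X₀ : Ω → ℝ) (hX₀ : X₀ ∈ S.carrier) (hX₀pos : ∀ᵐ ω ∂μ, 0 ≤ X₀ ω)
    (hfail : 0 < sInf {z : ℝ |
      ∃ Z ∈ convexHull ℝ {X | X ∈ S.carrier ∧ μ.map X = μ.map X₀},
      ∃ V ∈ S.oc, z = S.N (Z - V)}) :
    0 < sInf {z : ℝ |
      ∃ Z ∈ convexHull ℝ {X | X ∈ S.carrier ∧ μ.map X = μ.map X₀},
      ∃ V ∈ convexHull ℝ
        (S.oc ∪ {W | ∃ U ∈ S.carrier, (∀ᵐ ω ∂μ, 0 ≤ U ω) ∧ W = -U}),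
      z = S.N (Z - V)} :=
  dist_positive_to_hull_general μ S X₀ hX₀ hX₀pos hfail
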